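/- Let n be a positive integer, let J : ℝⁿ → ℝ be differentiable with J(z) ≥ 0 for all z, and let α : ℝ → ℝ be an extended class K function. Let x : ℝ → ℝⁿ be differentiable and satisfy, for all t, x'(t) = (α(-J(x(t))) / (1 + ‖∇J(x(t))‖²)) • ∇J(x(t)). Then for all t, the derivative of t ↦ J(x(t)) equals α(-J(x(t)))·‖∇J(x(t))‖² / (1 + ‖∇J(x(t))‖²); in particular this derivative is ≤ 0, it is strictly negative whenever ∇J(x(t)) ≠ 0 and J(x(t)) > 0, and it is zero whenever ∇J(x(t)) = 0. -/

import Mathlib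

open Real

open scoped RealInnerProductSpace

/- Along the flow, the cost changes at rate `⟪∇J, x'⟫ = α(-J) ‖∇J‖² / (1 + ‖∇J‖²)`. Since `J ≥ 0` and
`α` is strictly increasing with `α 0 = 0`, the factor `α(-J)` is nonpositive, and negative when
`J > 0`; the remaining factor `‖∇J‖² / (1 + ‖∇J‖²)` is nonnegative and vanishes exactly at
stationary points. -/

theorem HasGradientAt.comp_hasDerivAt {E : Type*} [NormedAddCommGroup E] [InnerProductSpace ℝ E]
    [CompleteSpace E] {f : E → ℝ} {f' : E} {x : ℝ → E} {x' : E} {t : ℝ}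
    (hf : HasGradientAt f f' (x t)) (hx : HasDerivAt x x' t) :
    HasDerivAt (fun s => f (x s)) ⟪f', x'⟫ t :=
  hf.hasFDerivAt.comp_hasDerivAt t hx

theorem inner_smul_div_one_add_norm_sq {E : Type*} [NormedAddCommGroup E]
    [InnerProductSpace ℝ E] (c : ℝ) (g : E) :
    ⟪g, (c / (1 + ‖g‖ ^ 2)) • g⟫ = c * ‖g‖ ^ 2 / (1 + ‖g‖ ^ 2) := by
  rw [real_inner_smul_right, real_inner_self_eq_norm_sq]
  ring

theorem StrictMono.apply_neg_nonpos {α : ℝ → ℝ} (hα : StrictMono α) (hα0 : α 0 = 0) {a : ℝ}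
    (ha : 0 ≤ a) : α (-a) ≤ 0 :=
  hα0 ▸ hα.monotone (neg_nonpos.mpr ha)

theorem StrictMono.apply_neg_neg {α : ℝ → ℝ} (hα : StrictMono α) (hα0 : α 0 = 0) {a : ℝ}
    (ha : 0 < a) : α (-a) < 0 :=
  hα0 ▸ hα (neg_neg_of_pos ha)

theorem cost_evolution_relaxed_general
    (n : ℕ)
    (J : EuclideanSpace ℝ (Fin n) → ℝ) (hJdiff : Differentiable ℝ J)
    (hJnn : ∀ z : EuclideanSpace ℝ (Fin n), 0 ≤ J z)
    (α : ℝ → ℝ) (hαmono : StrictMono α) (hα0 : α 0 = 0)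
    (x : ℝ → EuclideanSpace ℝ (Fin n)) (hx : Differentiable ℝ x)
    (hode : ∀ t : ℝ, deriv x t
      = (α (-(J (x t))) / (1 + ‖gradient J (x t)‖ ^ 2)) • gradient J (x t)) :
    ∀ t : ℝ,
      deriv (fun s => J (x s)) t
        = α (-(J (x t))) * ‖gradient J (x t)‖ ^ 2 / (1 + ‖gradient J (x t)‖ ^ 2) ∧
      deriv (fun s => J (x s)) t ≤ 0 ∧
      (gradient J (x t) ≠ 0 → 0 < J (x t) → deriv (fun s => J (x s)) t < 0) ∧
      (gradient J (x t) = 0 → deriv (fun s => J (x s)) t = 0) := by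
  intro t
  have hderiv : deriv (fun s => J (x s)) t
      = α (-(J (x t))) * ‖gradient J (x t)‖ ^ 2 / (1 + ‖gradient J (x t)‖ ^ 2) := by
    rw [((hJdiff (x t)).hasGradientAt.comp_hasDerivAt (hx t).hasDerivAt).deriv, hode t,
      inner_smul_div_one_add_norm_sq]
  have hα_nonpos := hαmono.apply_neg_nonpos hα0 (hJnn (x t))
  refine ⟨hderiv, ?_, fun hgrad hJpos => ?_, fun hgrad => ?_⟩ <;> rw [hderiv]
  · exact div_nonpos_of_nonpos_of_nonneg
      (mul_nonpos_of_nonpos_of_nonneg hα_nonpos (by positivity)) (by positivity)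
  · exact div_neg_of_neg_of_pos (mul_neg_of_neg_of_pos (hαmono.apply_neg_neg hα0 hJpos)
      (pow_pos (norm_pos_iff.mpr hgrad) 2)) (by positivity)
  · simp [hgrad]

/-- Cost evolution under the relaxed minimum-energy input (Proposition 1): if
`x' t = (α (-J (x t)) / (1 + ‖∇J (x t)‖²)) • ∇J (x t)`, then
`(d/dt) J (x t) = α (-J (x t)) ‖∇J (x t)‖² / (1 + ‖∇J (x t)‖²)`; in particular
the derivative is nonpositive, strictly negative when `∇J (x t) ≠ 0` and
`J (x t) > 0`, and zero when `∇J (x t) = 0`. -/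
theorem cost_evolution_relaxed
    (n : ℕ) (hn : 0 < n)
    (J : EuclideanSpace ℝ (Fin n) → ℝ) (hJdiff : Differentiable ℝ J)
    (hJnn : ∀ z : EuclideanSpace ℝ (Fin n), 0 ≤ J z)
    (α : ℝ → ℝ) (hαcont : Continuous α) (hαmono : StrictMono α) (hα0 : α 0 = 0)
    (x : ℝ → EuclideanSpace ℝ (Fin n)) (hx : Differentiable ℝ x)
    (hode : ∀ t : ℝ, deriv x t
      = (α (-(J (x t))) / (1 + ‖gradient J (x t)‖ ^ 2)) • gradient J (x t)) :
    ∀ t : ℝ,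
      deriv (fun s => J (x s)) t
        = α (-(J (x t))) * ‖gradient J (x t)‖ ^ 2 / (1 + ‖gradient J (x t)‖ ^ 2) ∧
      deriv (fun s => J (x s)) t ≤ 0 ∧
      (gradient J (x t) ≠ 0 → 0 < J (x t) → deriv (fun s => J (x s)) t < 0) ∧
      (gradient J (x t) = 0 → deriv (fun s => J (x s)) t = 0) :=
  cost_evolution_relaxed_general n J hJdiff hJnn α hαmono hα0 x hx hode
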